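/- Let I = (G, {W_1, …, W_t}, k) be an instance of Partitioned Subset Treewidth with t ≥ 2 that has no safe separations. Let i ∈ [t] be such that |W_i| ≤ k and there exists j ≠ i with |W_j| ≥ |W_i| and W_j not a superset of W_i, and let v ∈ V(G) \ W_i. Then flp_{I + (W_i, {v})}(W_i ∪ {v}) ≥ flp_I(W_i) + 1. -/

import Mathlib

open SimpleGraph

variable {V ι : Type*}

/-- The torso of `G` on a vertex set `X`: vertices `u ≠ v` of `X` are adjacent iff there is a
`u`–`v` walk in `G` all of whose internal vertices lie outside `X`. -/
def torsoGraph (G : SimpleGraph V) (X : Set V) : SimpleGraph V where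
  Adj u v := u ≠ v ∧ u ∈ X ∧ v ∈ X ∧
    ∃ p : G.Walk u v, ∀ w ∈ p.support, w = u ∨ w = v ∨ w ∉ X
  symm := ⟨by
    rintro u v ⟨hne, hu, hv, p, hp⟩
    refine ⟨hne.symm, hv, hu, p.reverse, ?_⟩
    intro w hw
    rw [SimpleGraph.Walk.support_reverse, List.mem_reverse] at hw
    rcases hp w hw with h | h | h
    · exact Or.inr (Or.inl h)
    · exact Or.inl h
    · exact Or.inr (Or.inr h)⟩
  loopless := ⟨fun _ h => h.1 rfl⟩

/-- `(T, bag)` is a tree decomposition of `G`. -/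
structure IsTreeDecomp (G : SimpleGraph V) (T : SimpleGraph ι) (bag : ι → Set V) : Prop where
  tree : T.IsTree
  mem_bag : ∀ v : V, ∃ t, v ∈ bag t
  edge_bag : ∀ ⦃u v : V⦄, G.Adj u v → ∃ t, u ∈ bag t ∧ v ∈ bag t
  conn : ∀ v : V, (T.induce {t | v ∈ bag t}).Connected

/-- `(X, (T, bag))` is a torso tree decomposition in `G`, i.e. `(T, bag)` is a tree
decomposition of `torsoGraph G X`. -/
structure IsTorsoTreeDecomp (G : SimpleGraph V) (X : Set V)
    (T : SimpleGraph ι) (bag : ι → Set V) : Prop where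
  tree : T.IsTree
  bag_subset : ∀ t, bag t ⊆ X
  mem_bag : ∀ v ∈ X, ∃ t, v ∈ bag t
  edge_bag : ∀ ⦃u v : V⦄, (torsoGraph G X).Adj u v → ∃ t, u ∈ bag t ∧ v ∈ bag t
  conn : ∀ v ∈ X, (T.induce {t | v ∈ bag t}).Connected

/-- `G` has treewidth at most `k`. -/
def HasTreewidthAtMost (G : SimpleGraph V) (k : ℕ) : Prop :=
  ∃ (n : ℕ) (T : SimpleGraph (Fin n)) (bag : Fin n → Set V),
    IsTreeDecomp G T bag ∧ ∀ t, (bag t).ncard ≤ k + 1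

/-- `S` is an `(X, Y)`-separator in `G`: every walk from `X` to `Y` meets `S`. -/
def IsSep (G : SimpleGraph V) (X Y S : Set V) : Prop :=
  ∀ ⦃x y : V⦄, x ∈ X → y ∈ Y → ∀ p : G.Walk x y, ∃ s ∈ S, s ∈ p.support

/-- The maximum number of vertex-disjoint `X`–`Y` paths; by Menger's theorem this equals the
minimum size of an `(X, Y)`-separator, which is how we define it. -/
noncomputable def flowG (G : SimpleGraph V) (X Y : Set V) : ℕ :=
  sInf (Set.ncard '' {S : Set V | IsSep G X Y S})

/-- `X` is linked into `Y`. -/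
def LinkedInto (G : SimpleGraph V) (X Y : Set V) : Prop :=
  flowG G X Y = X.ncard

/-- `X` is strictly linked into `Y`. -/
def StrictlyLinkedInto (G : SimpleGraph V) (X Y : Set V) : Prop :=
  LinkedInto G X Y ∧
    ∀ S : Set V, IsSep G X Y S → S.ncard = X.ncard → S = X ∨ S = Y

/-- `R_G(X, S)`: the set of vertices of `G \ S` reachable from `X \ S`. -/
def reachG (G : SimpleGraph V) (X S : Set V) : Set V :=
  {v | ∃ x ∈ X, x ∉ S ∧ ∃ p : G.Walk x v, ∀ w ∈ p.support, w ∉ S}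

/-- `S` is a minimal `(X, Y)`-separator. -/
def IsMinimalSep (G : SimpleGraph V) (X Y S : Set V) : Prop :=
  IsSep G X Y S ∧ ∀ S' : Set V, S' ⊂ S → ¬ IsSep G X Y S'

/-- `S` is an important `(A, B)`-separator. -/
def IsImportantSep (G : SimpleGraph V) (A B S : Set V) : Prop :=
  IsMinimalSep G A B S ∧
    ¬ ∃ S' : Set V, IsSep G A B S' ∧ S'.ncard ≤ S.ncard ∧ reachG G A S ⊂ reachG G A S'

/-- The important `(A, B)`-separator `S'` dominates the `(A, B)`-separator `S`. -/
def DominatesSep (G : SimpleGraph V) (A B S S' : Set V) : Prop :=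
  IsImportantSep G A B S' ∧ S'.ncard ≤ S.ncard ∧ reachG G A S ⊆ reachG G A S'

/-- `(A, S, B)` is a separation of `G`. -/
structure IsSeparation (G : SimpleGraph V) (A S B : Set V) : Prop where
  disjoint_AS : Disjoint A S
  disjoint_AB : Disjoint A B
  disjoint_SB : Disjoint S B
  union_eq : A ∪ S ∪ B = Set.univ
  no_adj : ∀ ⦃a b : V⦄, a ∈ A → b ∈ B → ¬ G.Adj a b

open Classical in
/-- The flow potential `flp_G(X, Y)`. -/
noncomputable def flpG (G : SimpleGraph V) (X Y : Set V) : ℕ :=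
  if X = Set.univ then X.ncard
  else sInf {n : ℕ | ∃ A S B : Set V, IsSeparation G A S B ∧
    X ⊆ A ∪ S ∧ Y ⊆ B ∪ S ∧ B.Nonempty ∧ S.ncard = n}

/-- The graph consisting of a clique on `S` (and no other edges). -/
def cliqueOn (S : Set V) : SimpleGraph V where
  Adj u v := u ≠ v ∧ u ∈ S ∧ v ∈ S
  symm := ⟨fun _ _ ⟨h, hu, hv⟩ => ⟨h.symm, hv, hu⟩⟩
  loopless := ⟨fun _ h => h.1 rfl⟩

/-- `G ⊗ S`: the graph obtained from `G` by making `S` a clique. -/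
def addCliqueG (G : SimpleGraph V) (S : Set V) : SimpleGraph V := G ⊔ cliqueOn S

/-- `(G, Ws, k)` is an instance of Partitioned Subset Treewidth: `Ws` is a finite nonempty
family of terminal cliques, `k ≥ 1`, each terminal clique being a clique of `G` of size at
most `k + 1`. -/
def IsPSTWInstance (G : SimpleGraph V) (Ws : Set (Set V)) (k : ℕ) : Prop :=
  Ws.Finite ∧ Ws.Nonempty ∧ 1 ≤ k ∧ ∀ W ∈ Ws, G.IsClique W ∧ W.ncard ≤ k + 1

/-- `(X, (T, bag))` is a solution of the instance `(G, Ws, k)`. -/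
def IsSolutionTD (G : SimpleGraph V) (Ws : Set (Set V)) (k : ℕ)
    (X : Set V) (T : SimpleGraph ι) (bag : ι → Set V) : Prop :=
  IsTorsoTreeDecomp G X T bag ∧ ⋃₀ Ws ⊆ X ∧ ∀ t, (bag t).ncard ≤ k + 1

/-- The instance `(G, Ws, k)` is a yes-instance. -/
def IsYesInstance (G : SimpleGraph V) (Ws : Set (Set V)) (k : ℕ) : Prop :=
  ∃ (κ : Type) (T : SimpleGraph κ) (bag : κ → Set V) (X : Set V),
    IsSolutionTD G Ws k X T bag

/-- `W̄_I(W)`: the union of the terminal cliques other than `W`. -/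
def otherUnion (Ws : Set (Set V)) (W : Set V) : Set V := ⋃₀ (Ws \ {W})

/-- `flp_I(W) = flp_G(W, W̄_I(W))`. -/
noncomputable def flpInst (G : SimpleGraph V) (Ws : Set (Set V)) (W : Set V) : ℕ :=
  flpG G W (otherUnion Ws W)

/-- `(A, S, B)` is a safe separation of the instance `(G, Ws, k)`. -/
def IsSafeSeparation (G : SimpleGraph V) (Ws : Set (Set V)) (A S B : Set V) : Prop :=
  IsSeparation G A S B ∧ A.Nonempty ∧ B.Nonempty ∧
    ∃ Wa ∈ Ws, ∃ Wb ∈ Ws,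
      LinkedInto G S ((A ∪ S) ∩ Wa) ∧ LinkedInto G S ((B ∪ S) ∩ Wb)

/-- `Ws ◁ (A, S)`: remove the terminal cliques not meeting `A`, then insert `S` if no superset
of `S` is present. -/
def restrictCliques (Ws : Set (Set V)) (A S : Set V) : Set (Set V) :=
  {W ∈ Ws | (W ∩ A).Nonempty} ∪
    {W | W = S ∧ ¬ ∃ W' ∈ Ws, (W' ∩ A).Nonempty ∧ S ⊆ W'}

/-- `G ◁ (A, S) = G[A ∪ S] ⊗ S`, as a graph on the vertex set `A ∪ S`. -/
def restrictGraph (G : SimpleGraph V) (A S : Set V) : SimpleGraph ↥(A ∪ S) :=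
  addCliqueG (G.induce (A ∪ S)) (Subtype.val ⁻¹' S)

/-- The terminal cliques of `I ◁ (A, S)`, viewed as subsets of the vertex set `A ∪ S`. -/
def restrictSets (Ws : Set (Set V)) (A S : Set V) : Set (Set ↥(A ∪ S)) :=
  (fun W => Subtype.val ⁻¹' W) '' restrictCliques Ws A S

/-- The terminal cliques of `I × (Wi, Wj)`. -/
def mergeCliques (Ws : Set (Set V)) (Wi Wj : Set V) : Set (Set V) :=
  insert (Wi ∪ Wj) (Ws \ {Wi, Wj})

/-- The terminal cliques of `I + (W, ·)`, replacing `W` by `W'`. -/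
def replaceClique (Ws : Set (Set V)) (W W' : Set V) : Set (Set V) :=
  insert W' (Ws \ {W})

/-- The instance `(G, Ws, k)` is maximally merged. -/
def MaximallyMerged (G : SimpleGraph V) (Ws : Set (Set V)) (k : ℕ) : Prop :=
  ∀ Wi ∈ Ws, ∀ Wj ∈ Ws, Wi ≠ Wj → (Wi ∪ Wj).ncard ≤ k + 1 →
    ¬ IsYesInstance (addCliqueG G (Wi ∪ Wj)) (mergeCliques Ws Wi Wj) k

/-- `Wi` is a potential forget-clique of the instance `(G, Ws, k)`. -/
def IsPotentialForgetClique (G : SimpleGraph V) (Ws : Set (Set V)) (k : ℕ)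
    (Wi : Set V) : Prop :=
  ∃ (κ : Type) (T : SimpleGraph κ) (bag : κ → Set V) (X : Set V),
    IsSolutionTD G Ws k X T bag ∧
    ∃ l p : κ, T.Adj l p ∧ (∀ q, T.Adj l q → q = p) ∧
      Wi ⊆ bag l ∧ ∃ w ∈ Wi \ otherUnion Ws Wi, bag p = bag l \ {w}

/-- The disjoint union of two trees together with one extra edge between `a` and `b`. -/
def glueTrees {ι₁ ι₂ : Type*} (T₁ : SimpleGraph ι₁) (T₂ : SimpleGraph ι₂)
    (a : ι₁) (b : ι₂) : SimpleGraph (ι₁ ⊕ ι₂) where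
  Adj x y :=
    (∃ u v, T₁.Adj u v ∧ x = Sum.inl u ∧ y = Sum.inl v) ∨
    (∃ u v, T₂.Adj u v ∧ x = Sum.inr u ∧ y = Sum.inr v) ∨
    (x = Sum.inl a ∧ y = Sum.inr b) ∨
    (x = Sum.inr b ∧ y = Sum.inl a)
  symm := ⟨by
    rintro x y (⟨u, v, h, rfl, rfl⟩ | ⟨u, v, h, rfl, rfl⟩ | ⟨rfl, rfl⟩ | ⟨rfl, rfl⟩)
    · exact Or.inl ⟨v, u, h.symm, rfl, rfl⟩
    · exact Or.inr (Or.inl ⟨v, u, h.symm, rfl, rfl⟩)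
    · exact Or.inr (Or.inr (Or.inr ⟨rfl, rfl⟩))
    · exact Or.inr (Or.inr (Or.inl ⟨rfl, rfl⟩))⟩
  loopless := ⟨by
    rintro x (⟨u, v, h, rfl, he⟩ | ⟨u, v, h, rfl, he⟩ | ⟨rfl, he⟩ | ⟨rfl, he⟩)
    · exact h.ne (Sum.inl.inj he)
    · exact h.ne (Sum.inr.inj he)
    · exact Sum.inl_ne_inr he
    · exact Sum.inr_ne_inl he⟩

/-- The sum of the weights `d` over the set `S`. -/
noncomputable def setSum [Finite V] (d : V → ℕ) (S : Set V) : ℕ :=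
  ∑ v ∈ S.toFinite.toFinset, d v

/-! Any separation `(A, S, B)` of `G` with `W_i ⊆ A ∪ S`, `W_j ⊆ B ∪ S` and `|S| ≤ |W_i|`
has `A = ∅`. Indeed, without safe separations every `(W_i, W_j)`-separator has at least
`|W_i| ≤ |W_j|` vertices (a smaller minimum separator, cut out by the vertices it reaches
from `W_i`, would be safe), so `S` is a minimum separator; a minimum separator is linked into
both sides, so `(A, S, B)` itself would be safe if `A` were nonempty. Adding `v` to `W_i` only
adds edges, so a separation witnessing `flp` for `W_i ∪ {v}` is one of `G` with
`W_i ∪ {v} ⊆ S`, whence `|S| ≥ |W_i| + 1 ≥ flp_I(W_i) + 1`. -/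

section Separators

variable {G : SimpleGraph V}

lemma isSep_self_left (X Y : Set V) : IsSep G X Y X :=
  fun x _ hx _ p => ⟨x, hx, p.start_mem_support⟩

lemma exists_isSep_forall_ncard_le (X Y : Set V) :
    ∃ Z, IsSep G X Y Z ∧ ∀ Z', IsSep G X Y Z' → Z.ncard ≤ Z'.ncard := by
  obtain ⟨Z, hZ, hmin⟩ := Nat.sInf_mem (s := Set.ncard '' {Z | IsSep G X Y Z})
    ⟨X.ncard, X, isSep_self_left X Y, rfl⟩
  exact ⟨Z, hZ, fun Z' hZ' => hmin ▸ Nat.sInf_le ⟨Z', hZ', rfl⟩⟩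

lemma linkedInto_of_forall_ncard_le {X Y : Set V}
    (h : ∀ Z, IsSep G X Y Z → X.ncard ≤ Z.ncard) : LinkedInto G X Y :=
  le_antisymm (Nat.sInf_le ⟨X, isSep_self_left X Y, rfl⟩) <|
    le_csInf ⟨X.ncard, X, isSep_self_left X Y, rfl⟩ fun _ ⟨Z, hZ, hn⟩ => hn ▸ h Z hZ

lemma IsSep.trans_left {P Q S Z : Set V} (hS : IsSep G P Q S) (hZ : IsSep G S P Z) :
    IsSep G P Q Z := by
  classical
  intro x y hx hy p
  obtain ⟨s, hsS, hs⟩ := hS hx hy p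
  obtain ⟨z, hzZ, hz⟩ := hZ hsS hx (p.takeUntil s hs).reverse
  rw [Walk.support_reverse, List.mem_reverse] at hz
  exact ⟨z, hzZ, p.support_takeUntil_subset_support hs hz⟩

lemma IsSep.trans_right {P Q S Z : Set V} (hS : IsSep G P Q S) (hZ : IsSep G S Q Z) :
    IsSep G P Q Z := by
  classical
  intro x y hx hy p
  obtain ⟨s, hsS, hs⟩ := hS hx hy p
  obtain ⟨z, hzZ, hz⟩ := hZ hsS hy (p.dropUntil s hs)
  exact ⟨z, hzZ, p.support_dropUntil_subset_support hs hz⟩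

lemma IsSeparation.mono {H : SimpleGraph V} {A S B : Set V} (hGH : G ≤ H)
    (h : IsSeparation H A S B) : IsSeparation G A S B :=
  { h with no_adj := fun _ _ ha hb hadj => h.no_adj ha hb (hGH hadj) }

lemma IsSeparation.mem_left_of_walk {A S B : Set V} (h : IsSeparation G A S B) {x y : V}
    (p : G.Walk x y) (hx : x ∈ A) (hp : ∀ w ∈ p.support, w ∉ S) : y ∈ A := by
  induction p with
  | nil => exact hx
  | @cons u w y hadj q ih =>
    refine ih ?_ fun z hz => hp z (List.mem_cons_of_mem _ hz)
    have hwS : w ∉ S := hp w (List.mem_cons_of_mem _ q.start_mem_support)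
    rcases (h.union_eq ▸ Set.mem_univ w : w ∈ A ∪ S ∪ B) with (hw | hw) | hw
    · exact hw
    · exact absurd hw hwS
    · exact absurd hadj (h.no_adj hx hw)

lemma IsSeparation.isSep {A S B P Q : Set V} (h : IsSeparation G A S B)
    (hP : P ⊆ A ∪ S) (hQ : Q ⊆ B ∪ S) : IsSep G P Q S := by
  intro x y hx hy p
  by_contra! hp
  have hxA : x ∈ A := (hP hx).resolve_right fun hxS => hp x hxS p.start_mem_support
  have hyA : y ∈ A := h.mem_left_of_walk p hxA fun w hw hwS => hp w hwS hw
  have hyB : y ∈ B := (hQ hy).resolve_right fun hyS => hp y hyS p.end_mem_support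
  exact Set.disjoint_left.mp h.disjoint_AB hyA hyB

lemma subset_reachG_union (P Z : Set V) : P ⊆ reachG G P Z ∪ Z := by
  intro x hx
  by_cases hxZ : x ∈ Z
  · exact Or.inr hxZ
  · exact Or.inl ⟨x, hx, hxZ, Walk.nil, by simpa using hxZ⟩

lemma IsSep.subset_compl_reachG_union {P Q Z : Set V} (hZ : IsSep G P Q Z) :
    Q ⊆ (reachG G P Z ∪ Z)ᶜ ∪ Z := by
  intro y hy
  by_cases hyZ : y ∈ Z
  · exact Or.inr hyZ
  · refine Or.inl fun hmem => hmem.elim (fun ⟨x, hx, _, p, hp⟩ => ?_) hyZ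
    obtain ⟨s, hsZ, hs⟩ := hZ hx hy p
    exact hp s hs hsZ

lemma isSeparation_reachG (P Z : Set V) :
    IsSeparation G (reachG G P Z) Z (reachG G P Z ∪ Z)ᶜ where
  disjoint_AS := Set.disjoint_left.mpr fun _ ⟨_, _, _, p, hp⟩ => hp _ p.end_mem_support
  disjoint_AB := disjoint_compl_right.mono_left Set.subset_union_left
  disjoint_SB := disjoint_compl_right.mono_left Set.subset_union_right
  union_eq := Set.union_compl_self _
  no_adj := by
    rintro a b ⟨x, hx, hxZ, p, hp⟩ hb hadj
    have hbZ : b ∉ Z := fun h => hb (Or.inr h)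
    refine hb (Or.inl ⟨x, hx, hxZ, p.concat hadj, fun w hw => ?_⟩)
    rw [Walk.support_concat, List.mem_append, List.mem_singleton] at hw
    rcases hw with hw | rfl
    · exact hp w hw
    · exact hbZ

end Separators

section NoSafeSeparation

variable {G : SimpleGraph V} {Ws : Set (Set V)}

lemma isSafeSeparation_of_isSep_forall_ncard_le {A S B Wa Wb : Set V}
    (hsep : IsSeparation G A S B) (hA : A.Nonempty) (hB : B.Nonempty)
    (hWa : Wa ∈ Ws) (hWb : Wb ∈ Ws) (hWaAS : Wa ⊆ A ∪ S) (hWbBS : Wb ⊆ B ∪ S)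
    (hmin : ∀ Z, IsSep G Wa Wb Z → S.ncard ≤ Z.ncard) :
    IsSafeSeparation G Ws A S B := by
  have hS : IsSep G Wa Wb S := hsep.isSep hWaAS hWbBS
  refine ⟨hsep, hA, hB, Wa, hWa, Wb, hWb, ?_, ?_⟩
  · rw [Set.inter_eq_right.mpr hWaAS]
    exact linkedInto_of_forall_ncard_le fun Z hZ => hmin Z (hS.trans_left hZ)
  · rw [Set.inter_eq_right.mpr hWbBS]
    exact linkedInto_of_forall_ncard_le fun Z hZ => hmin Z (hS.trans_right hZ)

variable [Finite V]

lemma ncard_le_of_isSep_of_forall_not_isSafeSeparation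
    (hnosafe : ∀ A S B : Set V, ¬ IsSafeSeparation G Ws A S B)
    {Wa Wb Z : Set V} (hWa : Wa ∈ Ws) (hWb : Wb ∈ Ws) (hcard : Wa.ncard ≤ Wb.ncard)
    (hZ : IsSep G Wa Wb Z) : Wa.ncard ≤ Z.ncard := by
  obtain ⟨Z₀, hZ₀, hmin⟩ := exists_isSep_forall_ncard_le (G := G) Wa Wb
  refine le_trans ?_ (hmin Z hZ)
  by_contra! hlt
  have not_subset {W : Set V} (hW : Wa.ncard ≤ W.ncard) : ¬ W ⊆ Z₀ := fun h =>
    (Set.ncard_le_ncard h).not_gt (hlt.trans_le hW)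
  obtain ⟨a, ha, haZ⟩ := Set.not_subset.mp (not_subset le_rfl)
  obtain ⟨b, hb, hbZ⟩ := Set.not_subset.mp (not_subset hcard)
  refine hnosafe _ _ _ <| isSafeSeparation_of_isSep_forall_ncard_le
    (isSeparation_reachG Wa Z₀) ⟨a, ?_⟩ ⟨b, ?_⟩ hWa hWb (subset_reachG_union Wa Z₀)
    hZ₀.subset_compl_reachG_union hmin
  · exact (subset_reachG_union Wa Z₀ ha).resolve_right haZ
  · exact (hZ₀.subset_compl_reachG_union hb).resolve_right hbZ

lemma IsSeparation.eq_empty_of_forall_not_isSafeSeparation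
    (hnosafe : ∀ A S B : Set V, ¬ IsSafeSeparation G Ws A S B)
    {Wa Wb A S B : Set V} (hsep : IsSeparation G A S B)
    (hWa : Wa ∈ Ws) (hWb : Wb ∈ Ws) (hcard : Wa.ncard ≤ Wb.ncard)
    (hWaAS : Wa ⊆ A ∪ S) (hWbBS : Wb ⊆ B ∪ S) (hB : B.Nonempty)
    (hS : S.ncard ≤ Wa.ncard) : A = ∅ := by
  by_contra hA
  exact hnosafe A S B <| isSafeSeparation_of_isSep_forall_ncard_le hsep
    (Set.nonempty_iff_ne_empty.mpr hA) hB hWa hWb hWaAS hWbBS fun Z hZ =>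
      hS.trans (ncard_le_of_isSep_of_forall_not_isSafeSeparation hnosafe hWa hWb hcard hZ)

end NoSafeSeparation

section FlowPotential

variable {G : SimpleGraph V}

lemma isSeparation_empty_left (X : Set V) : IsSeparation G ∅ X Xᶜ where
  disjoint_AS := Set.empty_disjoint X
  disjoint_AB := Set.empty_disjoint Xᶜ
  disjoint_SB := disjoint_compl_right
  union_eq := by simp
  no_adj := fun _ _ ha => absurd ha (Set.notMem_empty _)

lemma flpG_le_ncard (X Y : Set V) : flpG G X Y ≤ X.ncard := by
  unfold flpG
  split_ifs with hX
  · exact le_rfl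
  · exact Nat.sInf_le ⟨∅, X, Xᶜ, isSeparation_empty_left X, by simp, by simp,
      Set.nonempty_compl.mpr hX, rfl⟩

lemma le_flpG {X Y : Set V} {n : ℕ} (hX : n ≤ X.ncard)
    (h : ∀ A S B, IsSeparation G A S B → X ⊆ A ∪ S → Y ⊆ B ∪ S → B.Nonempty →
      n ≤ S.ncard) :
    n ≤ flpG G X Y := by
  unfold flpG
  split_ifs with hXu
  · exact hX
  · refine le_csInf ⟨X.ncard, ∅, X, Xᶜ, isSeparation_empty_left X, by simp, by simp,
      Set.nonempty_compl.mpr hXu, rfl⟩ ?_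
    rintro _ ⟨A, S, B, hsep, hXAS, hYBS, hB, rfl⟩
    exact h A S B hsep hXAS hYBS hB

end FlowPotential

theorem add_vertex_flp_general {V : Type} [Fintype V]
    (G : SimpleGraph V) (Ws : Set (Set V))
    (hnosafe : ∀ A S B : Set V, ¬ IsSafeSeparation G Ws A S B)
    (Wi : Set V) (hWi : Wi ∈ Ws)
    (hWj : ∃ Wj ∈ Ws, Wj ≠ Wi ∧ Wi.ncard ≤ Wj.ncard ∧ ¬ Wi ⊆ Wj)
    (v : V) (hv : v ∉ Wi) :
    flpInst G Ws Wi + 1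
      ≤ flpInst (addCliqueG G (Wi ∪ {v})) (replaceClique Ws Wi (Wi ∪ {v}))
          (Wi ∪ {v}) := by
  obtain ⟨Wj, hWjWs, hWjne, hcard, hWj⟩ := hWj
  have hXcard : (Wi ∪ {v}).ncard = Wi.ncard + 1 := by
    rw [Set.union_singleton, Set.ncard_insert_of_notMem hv]
  have hflp : flpInst G Ws Wi ≤ Wi.ncard := flpG_le_ncard _ _
  have hWjX : Wj ∈ replaceClique Ws Wi (Wi ∪ {v}) \ {Wi ∪ {v}} :=
    ⟨Set.mem_insert_of_mem _ ⟨hWjWs, hWjne⟩,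
      fun h : Wj = Wi ∪ {v} => hWj (h ▸ Set.subset_union_left)⟩
  refine le_flpG (by omega) fun A S B hsep hXAS hYBS hB => ?_
  have hWjBS : Wj ⊆ B ∪ S := (Set.subset_sUnion_of_mem hWjX).trans hYBS
  by_contra! hS
  have hA : A = ∅ := (hsep.mono le_sup_left).eq_empty_of_forall_not_isSafeSeparation hnosafe
    hWi hWjWs hcard (Set.subset_union_left.trans hXAS) hWjBS hB (by omega)
  rw [hA, Set.empty_union] at hXAS
  have := Set.ncard_le_ncard hXAS
  omega

/-- Let `I = (G, Ws, k)` be an instance with at least two terminal cliques and no safe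
separations, let `W_i` be a terminal clique with `|W_i| ≤ k` such that some other terminal
clique `W_j` has `|W_j| ≥ |W_i|` and is not a superset of `W_i`, and let `v ∉ W_i`. Then
`flp_{I + (W_i, {v})}(W_i ∪ {v}) ≥ flp_I(W_i) + 1`. -/
theorem add_vertex_flp {V : Type} [Fintype V]
    (G : SimpleGraph V) (Ws : Set (Set V)) (k : ℕ)
    (hI : IsPSTWInstance G Ws k)
    (ht : 2 ≤ Ws.ncard)
    (hnosafe : ∀ A S B : Set V, ¬ IsSafeSeparation G Ws A S B)
    (Wi : Set V) (hWi : Wi ∈ Ws) (hWik : Wi.ncard ≤ k)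
    (hWj : ∃ Wj ∈ Ws, Wj ≠ Wi ∧ Wi.ncard ≤ Wj.ncard ∧ ¬ Wi ⊆ Wj)
    (v : V) (hv : v ∉ Wi) :
    flpInst G Ws Wi + 1
      ≤ flpInst (addCliqueG G (Wi ∪ {v})) (replaceClique Ws Wi (Wi ∪ {v}))
          (Wi ∪ {v}) :=
  add_vertex_flp_general G Ws hnosafe Wi hWi hWj v hv
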